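/- Let M be compact metric, μ a Borel probability measure, k symmetric nonnegative uniformly Lipschitz with k(p,p)=0. Let b_n → ∞, let g_n be minimizers of E_{b_n}, and suppose the probability measures ν_n = g_n dμ converge weakly to a probability measure ν. Then k(p,q) = 0 for all p, q in the support of ν. -/

import Mathlib

/-!
Write `J(f) = ∫∫ k f f`. Comparing `gₙ` with the uniform density `f` on a small ball, where `k` is
small because it vanishes on the diagonal, and using that the entropy of a probability density is
nonnegative, gives `J(gₙ) ≤ 2 ∫ f log f / bₙ + J(f)`, so `J(gₙ) → 0`. If `k p q > 0` for `p, q` in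
`supp ν`, then `k ≥ k p q / 2` on a product of balls around `p` and `q`, and bump functions `φ, ψ`
supported in these balls give
`J(gₙ) ≥ (k p q / 2) (∫ φ gₙ dμ) (∫ ψ gₙ dμ) → (k p q / 2) (∫ φ dν) (∫ ψ dν) > 0`.
-/

open MeasureTheory Real Filter Metric Set Topology

/-- The free energy `E_b[f] = ∫ f log f dμ + (b/2)∫∫ k(p,q) f(p) f(q) dμ(p) dμ(q)`. -/
noncomputable def freeEnergy {M : Type*} [MeasurableSpace M] (μ : Measure M)
    (k : M → M → ℝ) (b : ℝ) (f : M → ℝ) : ℝ :=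
  (∫ x, f x * Real.log (f x) ∂μ) + b / 2 * ∫ x, ∫ y, k x y * f x * f y ∂μ ∂μ

noncomputable def interaction {M : Type*} [MeasurableSpace M] (μ : Measure M)
    (k : M → M → ℝ) (f : M → ℝ) : ℝ :=
  ∫ x, ∫ y, k x y * f x * f y ∂μ ∂μ

section Measure

variable {M : Type*} [MeasurableSpace M] {μ : Measure M} {k : M → M → ℝ} {f : M → ℝ}

lemma freeEnergy_eq (b : ℝ) :
    freeEnergy μ k b f = ∫ x, f x * log (f x) ∂μ + b / 2 * interaction μ k f :=
  rfl

lemma integral_mul_log_nonneg [IsProbabilityMeasure μ] (hf0 : ∀ x, 0 ≤ f x)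
    (hfi : Integrable f μ) (hf1 : ∫ x, f x ∂μ = 1)
    (hflog : Integrable (fun x => f x * log (f x)) μ) : 0 ≤ ∫ x, f x * log (f x) ∂μ := by
  have h : ∫ x, (f x - 1) ∂μ ≤ ∫ x, f x * log (f x) ∂μ :=
    integral_mono (hfi.sub (integrable_const 1)) hflog fun x => self_sub_one_le_mul_log (hf0 x)
  rwa [integral_sub hfi (integrable_const 1), hf1, integral_const, probReal_univ, one_smul,
    sub_self] at h

lemma interaction_nonneg (hk0 : ∀ x y, 0 ≤ k x y) (hf0 : ∀ x, 0 ≤ f x) :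
    0 ≤ interaction μ k f :=
  integral_nonneg fun x => integral_nonneg fun y =>
    mul_nonneg (mul_nonneg (hk0 x y) (hf0 x)) (hf0 y)

lemma exists_density_eq_zero_off [IsFiniteMeasure μ] {s : Set M} (hs : MeasurableSet s)
    (hμs : 0 < μ s) :
    ∃ f : M → ℝ, Measurable f ∧ (∀ x, 0 ≤ f x) ∧ Integrable f μ ∧ ∫ x, f x ∂μ = 1 ∧
      Integrable (fun x => f x * log (f x)) μ ∧ ∀ x ∉ s, f x = 0 := by
  have hm : 0 < μ.real s := ENNReal.toReal_pos hμs.ne' (measure_ne_top μ s)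
  refine ⟨s.indicator fun _ => (μ.real s)⁻¹, measurable_const.indicator hs,
    indicator_nonneg fun _ _ => (inv_pos.2 hm).le, (integrable_const _).indicator hs, ?_, ?_,
    fun x hx => indicator_of_notMem hx _⟩
  · rw [integral_indicator_const _ hs, smul_eq_mul, mul_inv_cancel₀ hm.ne']
  · have hlog : (fun x => s.indicator (fun _ => (μ.real s)⁻¹) x *
        log (s.indicator (fun _ => (μ.real s)⁻¹) x)) =
        s.indicator fun _ => (μ.real s)⁻¹ * log (μ.real s)⁻¹ := by
      ext x
      by_cases hx : x ∈ s <;> simp [hx]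
    rw [hlog]
    exact (integrable_const _).indicator hs

end Measure

lemma mul_le_kernel_of_eqOn_compl {M : Type*} {k : M → M → ℝ} (hk0 : ∀ x y, 0 ≤ k x y)
    {a : ℝ} {U V : Set M} (hUV : ∀ x ∈ U, ∀ y ∈ V, a ≤ k x y) {φ ψ : M → ℝ}
    (hφ : ∀ x, φ x ∈ Icc 0 1) (hψ : ∀ x, ψ x ∈ Icc 0 1) (hφU : EqOn φ 0 Uᶜ)
    (hψV : EqOn ψ 0 Vᶜ) (x y : M) : a * φ x * ψ y ≤ k x y := by
  by_cases hx : x ∈ U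
  · by_cases hy : y ∈ V
    · have ha : a ≤ k x y := hUV x hx y hy
      have hφψ : φ x * ψ y ≤ 1 := mul_le_one₀ (hφ x).2 (hψ y).1 (hψ y).2
      nlinarith [mul_nonneg (hφ x).1 (hψ y).1, hk0 x y]
    · simpa [hψV hy] using hk0 x y
  · simpa [hφU hx] using hk0 x y

section CompactSpace

variable {M : Type*} [TopologicalSpace M] [CompactSpace M] [SecondCountableTopology M]
  [MeasurableSpace M] [OpensMeasurableSpace M] {μ : Measure M} {k : M → M → ℝ} {f : M → ℝ}

lemma integrable_kernel_mul_prod (hk : Continuous (Function.uncurry k)) {g : M → ℝ}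
    (hf : Integrable f μ) (hg : Integrable g μ) :
    Integrable (fun z : M × M => k z.1 z.2 * f z.1 * g z.2) (μ.prod μ) := by
  obtain ⟨C, hC⟩ := isCompact_univ.exists_bound_of_continuousOn hk.continuousOn
  simpa only [Function.uncurry_def, mul_assoc] using (hf.mul_prod hg).bdd_mul
    hk.aestronglyMeasurable (ae_of_all _ fun z => hC z (mem_univ z))

variable [SFinite μ]

lemma interaction_eq_integral_prod (hk : Continuous (Function.uncurry k))
    (hf : Integrable f μ) :
    interaction μ k f = ∫ z, k z.1 z.2 * f z.1 * f z.2 ∂μ.prod μ :=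
  (integral_prod _ (integrable_kernel_mul_prod hk hf hf)).symm

lemma interaction_le_of_le_on {s : Set M} {η : ℝ} (hk : Continuous (Function.uncurry k))
    (hks : ∀ x ∈ s, ∀ y ∈ s, k x y ≤ η) (hf0 : ∀ x, 0 ≤ f x) (hfs : ∀ x ∉ s, f x = 0)
    (hfi : Integrable f μ) (hf1 : ∫ x, f x ∂μ = 1) : interaction μ k f ≤ η := by
  have hpt : ∀ x y, k x y * f x * f y ≤ η * f x * f y := by
    intro x y
    by_cases hx : x ∈ s
    · by_cases hy : y ∈ s
      · exact mul_le_mul_of_nonneg_right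
          (mul_le_mul_of_nonneg_right (hks x hx y hy) (hf0 x)) (hf0 y)
      · simp [hfs y hy]
    · simp [hfs x hx]
  calc interaction μ k f = ∫ z, k z.1 z.2 * f z.1 * f z.2 ∂μ.prod μ :=
        interaction_eq_integral_prod hk hfi
    _ ≤ ∫ z, η * f z.1 * f z.2 ∂μ.prod μ :=
        integral_mono (integrable_kernel_mul_prod hk hfi hfi)
          ((hfi.const_mul η).mul_prod hfi) fun z => hpt z.1 z.2
    _ = (∫ x, η * f x ∂μ) * ∫ y, f y ∂μ := integral_prod_mul (fun x => η * f x) f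
    _ = η := by rw [integral_const_mul, hf1, mul_one, mul_one]

lemma mul_integral_mul_le_interaction (hk : Continuous (Function.uncurry k))
    (hf0 : ∀ x, 0 ≤ f x) (hfi : Integrable f μ) {a : ℝ} {φ ψ : C(M, ℝ)}
    (hkφψ : ∀ x y, a * φ x * ψ y ≤ k x y) :
    a * (∫ x, φ x * f x ∂μ) * (∫ x, ψ x * f x ∂μ) ≤ interaction μ k f := by
  have hφ : Integrable (fun x => φ x * f x) μ :=
    hfi.bdd_mul φ.continuous.aestronglyMeasurable (ae_of_all _ φ.norm_coe_le_norm)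
  have hψ : Integrable (fun x => ψ x * f x) μ :=
    hfi.bdd_mul ψ.continuous.aestronglyMeasurable (ae_of_all _ ψ.norm_coe_le_norm)
  have hpt : ∀ x y, a * (φ x * f x) * (ψ y * f y) ≤ k x y * f x * f y := fun x y =>
    calc a * (φ x * f x) * (ψ y * f y) = a * φ x * ψ y * (f x * f y) := by ring
      _ ≤ k x y * (f x * f y) := mul_le_mul_of_nonneg_right (hkφψ x y) (mul_nonneg (hf0 x) (hf0 y))
      _ = k x y * f x * f y := by ring
  calc a * (∫ x, φ x * f x ∂μ) * (∫ x, ψ x * f x ∂μ)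
      = (∫ x, a * (φ x * f x) ∂μ) * ∫ y, ψ y * f y ∂μ := by rw [integral_const_mul]
    _ = ∫ z, a * (φ z.1 * f z.1) * (ψ z.2 * f z.2) ∂μ.prod μ := (integral_prod_mul _ _).symm
    _ ≤ ∫ z, k z.1 z.2 * f z.1 * f z.2 ∂μ.prod μ :=
        integral_mono ((hφ.const_mul a).mul_prod hψ) (integrable_kernel_mul_prod hk hfi hfi)
          fun z => hpt z.1 z.2
    _ = interaction μ k f := (interaction_eq_integral_prod hk hfi).symm

end CompactSpace

lemma exists_continuous_integral_pos_of_mem_support {M : Type*} [PseudoMetricSpace M]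
    [MeasurableSpace M] [OpensMeasurableSpace M] {ν : Measure M} [IsFiniteMeasure ν] {p : M}
    (hp : p ∈ ν.support) {δ : ℝ} (hδ : 0 < δ) :
    ∃ φ : C(M, ℝ), (∀ x, φ x ∈ Icc 0 1) ∧ EqOn φ 0 (ball p δ)ᶜ ∧ 0 < ∫ x, φ x ∂ν := by
  obtain ⟨φ, hφ0, hφ1, hφ01⟩ := exists_continuous_zero_one_of_isClosed
    (isOpen_ball (x := p) (ε := δ)).isClosed_compl isClosed_closedBall
    (disjoint_compl_left_iff_subset.2 (closedBall_subset_ball (half_lt_self hδ)))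
  refine ⟨φ, hφ01, hφ0, ?_⟩
  have hpos : 0 < ν.real (closedBall p (δ / 2)) :=
    ENNReal.toReal_pos ((Measure.mem_support_iff_forall p).1 hp _
      (closedBall_mem_nhds p (half_pos hδ))).ne' (measure_ne_top ν _)
  have hle : ∀ x, (closedBall p (δ / 2)).indicator 1 x ≤ φ x := by
    intro x
    by_cases hx : x ∈ closedBall p (δ / 2)
    · simp [hx, hφ1 hx]
    · simpa [hx] using (hφ01 x).1
  calc 0 < ν.real (closedBall p (δ / 2)) := hpos
    _ = ∫ x, (closedBall p (δ / 2)).indicator 1 x ∂ν :=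
        (integral_indicator_one measurableSet_closedBall).symm
    _ ≤ ∫ x, φ x ∂ν :=
        integral_mono ((integrable_const 1).indicator measurableSet_closedBall)
          (Integrable.of_bound φ.continuous.aestronglyMeasurable 1
            (ae_of_all _ fun x => by
              rw [Real.norm_eq_abs, abs_of_nonneg (hφ01 x).1]
              exact (hφ01 x).2))
          hle

section CompactMetric

variable {M : Type*} [MetricSpace M] [CompactSpace M] [MeasurableSpace M] [BorelSpace M]
  {μ : Measure M} [IsProbabilityMeasure μ] {k : M → M → ℝ}

lemma exists_density_interaction_le (hk : Continuous (Function.uncurry k))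
    (hdiag : ∀ x, k x x = 0) {η : ℝ} (hη : 0 < η) :
    ∃ f : M → ℝ, Measurable f ∧ (∀ x, 0 ≤ f x) ∧ Integrable f μ ∧ ∫ x, f x ∂μ = 1 ∧
      Integrable (fun x => f x * log (f x)) μ ∧ interaction μ k f ≤ η := by
  obtain ⟨ε, hε, hkε⟩ := Metric.uniformContinuous_iff.1
    (CompactSpace.uniformContinuous_of_continuous hk) η hη
  obtain ⟨x₀, hx₀⟩ := Measure.nonempty_support (IsProbabilityMeasure.ne_zero μ)
  obtain ⟨f, hfm, hf0, hfi, hf1, hflog, hfs⟩ := exists_density_eq_zero_off (μ := μ)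
    measurableSet_ball ((Measure.mem_support_iff_forall x₀).1 hx₀ _ (ball_mem_nhds x₀ hε))
  refine ⟨f, hfm, hf0, hfi, hf1, hflog, interaction_le_of_le_on hk (fun x hx y hy => ?_) hf0 hfs
    hfi hf1⟩
  have hxy : dist (x, y) (x₀, x₀) < ε := by
    rw [Prod.dist_eq]
    exact max_lt (mem_ball.1 hx) (mem_ball.1 hy)
  have hkxy := hkε hxy
  rw [Real.dist_eq] at hkxy
  simp only [Function.uncurry_apply_pair, hdiag, sub_zero] at hkxy
  exact (le_abs_self _).trans hkxy.le

theorem tendsto_interaction_zero_of_minimizers (hk : Continuous (Function.uncurry k))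
    (hk0 : ∀ x y, 0 ≤ k x y) (hdiag : ∀ x, k x x = 0) {b : ℕ → ℝ}
    (hb : Tendsto b atTop atTop) {g : ℕ → M → ℝ} (hg0 : ∀ n x, 0 ≤ g n x)
    (hgi : ∀ n, Integrable (g n) μ) (hg1 : ∀ n, ∫ x, g n x ∂μ = 1)
    (hgent : ∀ n, Integrable (fun x => g n x * log (g n x)) μ)
    (hmin : ∀ n, ∀ f : M → ℝ, Measurable f → (∀ x, 0 ≤ f x) → Integrable f μ →
      (∫ x, f x ∂μ) = 1 → Integrable (fun x => f x * log (f x)) μ →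
      freeEnergy μ k (b n) (g n) ≤ freeEnergy μ k (b n) f) :
    Tendsto (fun n => interaction μ k (g n)) atTop (𝓝 0) := by
  refine tendsto_order.2 ⟨fun a ha => Eventually.of_forall fun n =>
    ha.trans_le (interaction_nonneg hk0 (hg0 n)), fun η hη => ?_⟩
  obtain ⟨f, hfm, hf0, hfi, hf1, hflog, hfη⟩ :=
    exists_density_interaction_le (μ := μ) hk hdiag (half_pos hη)
  set H := ∫ x, f x * log (f x) ∂μ
  filter_upwards [hb.eventually_gt_atTop 0, hb.eventually_gt_atTop (4 * H / η)] with n hbn hbH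
  -- `E_b(gₙ) ≤ E_b(f)` and `∫ gₙ log gₙ ≥ 0` give `bₙ/2 · J(gₙ) ≤ H + bₙ/2 · η/2 < bₙ/2 · η`.
  have hE := hmin n f hfm hf0 hfi hf1 hflog
  rw [freeEnergy_eq, freeEnergy_eq] at hE
  have hent := integral_mul_log_nonneg (hg0 n) (hgi n) (hg1 n) (hgent n)
  have hfη' := mul_le_mul_of_nonneg_left hfη (half_pos hbn).le
  have hH : 4 * H < b n * η := (div_lt_iff₀ hη).1 hbH
  have hJ : b n / 2 * interaction μ k (g n) < b n / 2 * η := by linarith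
  exact lt_of_mul_lt_mul_left hJ (half_pos hbn).le

end CompactMetric

theorem limit_support_kernel_zero_general {M : Type*} [MetricSpace M] [CompactSpace M]
    [MeasurableSpace M] [BorelSpace M] (μ : Measure M) [IsProbabilityMeasure μ]
    (k : M → M → ℝ) (L : ℝ)
    (hsym : ∀ p q, k p q = k q p) (hk0 : ∀ p q, 0 ≤ k p q)
    (hkL : ∀ p q s, |k p s - k q s| ≤ L * dist p q)
    (hdiag : ∀ p, k p p = 0)
    (b : ℕ → ℝ) (hb : Tendsto b atTop atTop)
    (g : ℕ → M → ℝ) (hg0 : ∀ n x, 0 ≤ g n x)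
    (hgi : ∀ n, Integrable (g n) μ) (hg1 : ∀ n, ∫ x, g n x ∂μ = 1)
    (hgent : ∀ n, Integrable (fun x => g n x * Real.log (g n x)) μ)
    (hmin : ∀ n, ∀ f : M → ℝ, Measurable f → (∀ x, 0 ≤ f x) → Integrable f μ →
      (∫ x, f x ∂μ) = 1 → Integrable (fun x => f x * Real.log (f x)) μ →
      freeEnergy μ k (b n) (g n) ≤ freeEnergy μ k (b n) f)
    (ν : Measure M) [IsProbabilityMeasure ν]
    (hweak : ∀ φ : C(M, ℝ),
      Tendsto (fun n => ∫ x, φ x * g n x ∂μ) atTop (nhds (∫ x, φ x ∂ν))) :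
    ∀ p q : M, (∀ ε : ℝ, 0 < ε → 0 < ν (Metric.ball p ε)) →
      (∀ ε : ℝ, 0 < ε → 0 < ν (Metric.ball q ε)) → k p q = 0 := by
  intro p q hp hq
  have hk : Continuous (Function.uncurry k) :=
    (LipschitzWith.uncurry
      (fun s => LipschitzWith.of_dist_le' fun x y => by rw [Real.dist_eq]; exact hkL x y s)
      fun s => LipschitzWith.of_dist_le' fun x y => by
        rw [Real.dist_eq, hsym s x, hsym s y]; exact hkL x y s).continuous
  by_contra hpq
  have hc : 0 < k p q := (hk0 p q).lt_of_ne' hpq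
  obtain ⟨δ, hδ, hkδ⟩ := Metric.eventually_nhds_iff.1
    ((hk.tendsto (p, q)).eventually (lt_mem_nhds (half_lt_self hc)))
  have hkpq : ∀ x ∈ ball p δ, ∀ y ∈ ball q δ, k p q / 2 ≤ k x y := fun x hx y hy =>
    (hkδ (y := (x, y)) (by rw [Prod.dist_eq]; exact max_lt hx hy)).le
  obtain ⟨φ, hφ01, hφ0, hφν⟩ := exists_continuous_integral_pos_of_mem_support
    (nhds_basis_ball.mem_measureSupport.2 hp) hδ
  obtain ⟨ψ, hψ01, hψ0, hψν⟩ := exists_continuous_integral_pos_of_mem_support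
    (nhds_basis_ball.mem_measureSupport.2 hq) hδ
  have hlower : ∀ n, k p q / 2 * (∫ x, φ x * g n x ∂μ) * (∫ x, ψ x * g n x ∂μ) ≤
      interaction μ k (g n) := fun n => mul_integral_mul_le_interaction hk (hg0 n) (hgi n)
    (mul_le_kernel_of_eqOn_compl hk0 hkpq hφ01 hψ01 hφ0 hψ0)
  have hlim := le_of_tendsto_of_tendsto (((hweak φ).const_mul _).mul (hweak ψ))
    (tendsto_interaction_zero_of_minimizers hk hk0 hdiag hb hg0 hgi hg1 hgent hmin)
    (Eventually.of_forall hlower)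
  have hpos : 0 < k p q / 2 * (∫ x, φ x ∂ν) * (∫ x, ψ x ∂ν) := by positivity
  linarith

theorem limit_support_kernel_zero {M : Type*} [MetricSpace M] [CompactSpace M]
    [MeasurableSpace M] [BorelSpace M] (μ : Measure M) [IsProbabilityMeasure μ]
    (k : M → M → ℝ) (L : ℝ)
    (hsym : ∀ p q, k p q = k q p) (hk0 : ∀ p q, 0 ≤ k p q)
    (hkL : ∀ p q s, |k p s - k q s| ≤ L * dist p q)
    (hdiag : ∀ p, k p p = 0)
    (b : ℕ → ℝ) (hbpos : ∀ n, 0 < b n) (hb : Tendsto b atTop atTop)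
    (g : ℕ → M → ℝ) (hgm : ∀ n, Measurable (g n)) (hg0 : ∀ n x, 0 ≤ g n x)
    (hgi : ∀ n, Integrable (g n) μ) (hg1 : ∀ n, ∫ x, g n x ∂μ = 1)
    (hgent : ∀ n, Integrable (fun x => g n x * Real.log (g n x)) μ)
    (hmin : ∀ n, ∀ f : M → ℝ, Measurable f → (∀ x, 0 ≤ f x) → Integrable f μ →
      (∫ x, f x ∂μ) = 1 → Integrable (fun x => f x * Real.log (f x)) μ →
      freeEnergy μ k (b n) (g n) ≤ freeEnergy μ k (b n) f)
    (ν : Measure M) [IsProbabilityMeasure ν]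
    (hweak : ∀ φ : C(M, ℝ),
      Tendsto (fun n => ∫ x, φ x * g n x ∂μ) atTop (nhds (∫ x, φ x ∂ν))) :
    ∀ p q : M, (∀ ε : ℝ, 0 < ε → 0 < ν (Metric.ball p ε)) →
      (∀ ε : ℝ, 0 < ε → 0 < ν (Metric.ball q ε)) → k p q = 0 :=
  limit_support_kernel_zero_general μ k L hsym hk0 hkL hdiag b hb g hg0 hgi hg1 hgent hmin ν hweak
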